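/- arXiv:1807.04810 — 2 statements merged into one kernel-verified Lean document; each statement's English description precedes it below -/
import Mathlib

section
/- For every integer n ≥ 3, the 1-eigenspace of Λ_n over F_2 satisfies 72 · dim_{F_2} E_1(Λ_n) ≥ 16n⁴ = |V(Λ_n)|. -/
/-!
A finitely supported function `P` on `RSet × ℤ⁴`, with 72 vertices in its support, satisfies the
1-eigenvalue equation of the `ℤ⁴`-cover of `MK`. Since that equation commutes with translations,
every convolution `l * P` with `l : (ℤ/n)⁴ → F₂` is a 1-eigenvector of `Λ_n`. Over the vertex `z`
this convolution is `l ↦ (1 + T₂)(1 + T₃) l`, where `Tᵢ` is translation by `eᵢ`, and it is injective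
on the functions vanishing wherever the second or third coordinate is `-1`. Hence
`dim E₁(Λ_n) ≥ n²(n - 1)²`, and `72 n²(n - 1)² ≥ 16 n⁴` for `n ≥ 3`.
-/


abbrev RSet := ZMod 2 × ZMod 2 × ZMod 2 × ZMod 2

def rmul (p q : RSet) : RSet :=
  (p.1 + q.1, p.2.1 + q.2.1, p.2.2.1 + q.2.2.1,
   p.2.2.2 + q.2.2.2 + p.2.1 * q.1 + p.2.2.1 * q.2.1 + p.2.2.1 * q.1)

def aR : RSet := (1, 0, 0, 0)
def bR : RSet := (0, 1, 0, 0)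
def cR : RSet := (0, 0, 1, 0)
def idR : RSet := (0, 0, 0, 0)
def zR : RSet := (0, 0, 0, 1)
def bcR : RSet := (0, 1, 1, 0)
def bzR : RSet := (0, 1, 0, 1)
def czR : RSet := (0, 0, 1, 1)
def bczR : RSet := (0, 1, 1, 1)

lemma rmul_aa : ∀ g : RSet, rmul aR (rmul aR g) = g := by decide
lemma rmul_bb : ∀ g : RSet, rmul bR (rmul bR g) = g := by decide
lemma rmul_cc : ∀ g : RSet, rmul cR (rmul cR g) = g := by decide

def MK : SimpleGraph RSet where
  Adj g h := g ≠ h ∧ (h = rmul aR g ∨ h = rmul bR g ∨ h = rmul cR g)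
  symm := ⟨by
    rintro g h ⟨hne, h1 | h1 | h1⟩
    · exact ⟨hne.symm, Or.inl (by rw [h1, rmul_aa])⟩
    · exact ⟨hne.symm, Or.inr (Or.inl (by rw [h1, rmul_bb]))⟩
    · exact ⟨hne.symm, Or.inr (Or.inr (by rw [h1, rmul_cc]))⟩⟩
  loopless := ⟨fun g hg => hg.1 rfl⟩

/-- Integer quadruples, recording voltages before reduction mod `n`. -/
abbrev ZQuad := ℤ × ℤ × ℤ × ℤ

/-- The voltage assignment `ζ` on the arcs of the Möbius–Kantor graph (with values
written in `ℤ⁴`; `e₁,…,e₄` are the standard basis vectors). -/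
def zetaZ (u v : RSet) : ZQuad :=
  if u = idR ∧ v = cR then (1, 0, 0, 0)
  else if u = cR ∧ v = bcR then (0, 1, 0, 0)
  else if u = bcR ∧ v = bzR then (0, 0, 1, 0)
  else if u = bzR ∧ v = zR then (0, 0, 0, 1)
  else if u = zR ∧ v = czR then (-1, 0, 0, 0)
  else if u = czR ∧ v = bczR then (0, -1, 0, 0)
  else if u = bczR ∧ v = bR then (0, 0, -1, 0)
  else if u = bR ∧ v = idR then (0, 0, 0, -1)
  else if u = cR ∧ v = idR then (-1, 0, 0, 0)
  else if u = bcR ∧ v = cR then (0, -1, 0, 0)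
  else if u = bzR ∧ v = bcR then (0, 0, -1, 0)
  else if u = zR ∧ v = bzR then (0, 0, 0, -1)
  else if u = czR ∧ v = zR then (1, 0, 0, 0)
  else if u = bczR ∧ v = czR then (0, 1, 0, 0)
  else if u = bR ∧ v = bczR then (0, 0, 1, 0)
  else if u = idR ∧ v = bR then (0, 0, 0, 1)
  else 0

lemma zetaZ_anti : ∀ u v : RSet, zetaZ v u = -zetaZ u v := by decide

/-- Quadruples over `ℤ/nℤ`. -/
abbrev NQuad (n : ℕ) := ZMod n × ZMod n × ZMod n × ZMod n

/-- Reduction of an integer quadruple modulo `n`. -/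
def castQuad (n : ℕ) (p : ZQuad) : NQuad n :=
  ((p.1 : ZMod n), (p.2.1 : ZMod n), (p.2.2.1 : ZMod n), (p.2.2.2 : ZMod n))

lemma castQuad_neg (n : ℕ) (p : ZQuad) : castQuad n (-p) = -castQuad n p := by
  simp [castQuad, Prod.ext_iff]

/-- The covering graph `Λ_n` of the Möbius–Kantor graph derived from the voltage
assignment `ζ` with values in `(ℤ/nℤ)⁴`. -/
def Lam (n : ℕ) : SimpleGraph (RSet × NQuad n) where
  Adj p q := MK.Adj p.1 q.1 ∧ q.2 = p.2 + castQuad n (zetaZ p.1 q.1)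
  symm := ⟨by
    rintro ⟨u, x⟩ ⟨v, y⟩ ⟨hadj, hy⟩
    refine ⟨hadj.symm, ?_⟩
    rw [zetaZ_anti u v, castQuad_neg, hy]
    abel⟩
  loopless := ⟨fun p hp => MK.irrefl hp.1⟩

open scoped Classical in
/-- The 1-eigenspace of the adjacency matrix of `Λ` over `F₂`. -/
noncomputable def eigOne {V : Type*} [Fintype V] (Λ : SimpleGraph V) :
    Submodule (ZMod 2) (V → ZMod 2) :=
  LinearMap.ker (Matrix.toLin' (Λ.adjMatrix (ZMod 2)) - LinearMap.id)

section CharTwo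

variable {R : Type*} [Ring R] [CharP R 2]

theorem List.sum_map_eq_zero_of_even_count {α : Type*} [BEq α] [LawfulBEq α] (L : List α)
    (f : α → R) (h : ∀ c ∈ L, Even (L.count c)) : (L.map f).sum = 0 := by
  classical
  rw [Finset.sum_list_map_count]
  refine Finset.sum_eq_zero fun c hc => ?_
  obtain ⟨k, hk⟩ : Even (@List.count α instBEqOfDecidableEq c L) := by
    convert h c (List.mem_toFinset.mp hc)
  rw [hk, add_nsmul, ← nsmul_add, CharTwo.add_self_eq_zero, nsmul_zero]

/-- In characteristic two, `hf` says that `f` is periodic with period `s`. -/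
theorem eq_zero_of_add_sub_eq_zero {G : Type*} [AddGroup G] {f : G → R} {s : G} {T : Set G}
    (hf : ∀ v, f v + f (v - s) = 0) (hT : ∀ v ∈ T, f v = 0)
    (hcover : ∀ v, ∃ k : ℕ, v + k • s ∈ T) : f = 0 := by
  have hper : Function.Periodic f s := fun v => by
    simpa [CharTwo.add_eq_iff_eq_add] using hf (v + s)
  funext v
  obtain ⟨k, hk⟩ := hcover v
  rw [← hper.nsmul k v]
  exact hT _ hk

end CharTwo

theorem mem_eigOne_iff {V : Type*} [Fintype V] (Λ : SimpleGraph V) (x : V → ZMod 2) :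
    open scoped Classical in x ∈ eigOne Λ ↔ ∀ v, ∑ u ∈ Λ.neighborFinset v, x u = x v := by
  classical
  simp only [eigOne, LinearMap.mem_ker, LinearMap.sub_apply, LinearMap.id_apply, sub_eq_zero,
    Matrix.toLin'_apply, funext_iff, SimpleGraph.adjMatrix_mulVec_apply]

section Cover

variable {n : ℕ}

theorem MK_adj_iff (u w : RSet) : MK.Adj u w ↔ w = rmul aR u ∨ w = rmul bR u ∨ w = rmul cR u := by
  refine ⟨And.right, fun h => ⟨?_, h⟩⟩
  have hne : ∀ g : RSet, g ≠ rmul aR g ∧ g ≠ rmul bR g ∧ g ≠ rmul cR g := by decide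
  rcases h with rfl | rfl | rfl
  exacts [(hne u).1, (hne u).2.1, (hne u).2.2]

def liftStep (n : ℕ) (u : RSet) (v : NQuad n) (s : RSet) : RSet × NQuad n :=
  (rmul s u, v + castQuad n (zetaZ u (rmul s u)))

theorem Lam_adj_iff (u : RSet) (v : NQuad n) (q : RSet × NQuad n) :
    (Lam n).Adj (u, v) q ↔ ∃ s ∈ ({aR, bR, cR} : Finset RSet), liftStep n u v s = q := by
  obtain ⟨w, y⟩ := q
  simp only [Lam, MK_adj_iff, liftStep, Finset.mem_insert, Finset.mem_singleton,
    exists_eq_or_imp, exists_eq_left, Prod.mk.injEq]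
  constructor
  · rintro ⟨rfl | rfl | rfl, rfl⟩ <;> simp
  · rintro (⟨rfl, rfl⟩ | ⟨rfl, rfl⟩ | ⟨rfl, rfl⟩) <;> simp

theorem rmul_right_cancel {s t u : RSet} (h : rmul s u = rmul t u) : s = t := by
  revert s t u; decide

theorem liftStep_injective (u : RSet) (v : NQuad n) : Function.Injective (liftStep n u v) :=
  fun _ _ h => rmul_right_cancel (congrArg Prod.fst h)

theorem sum_neighborFinset_Lam [NeZero n] (x : RSet × NQuad n → ZMod 2) (u : RSet)
    (v : NQuad n) :
    open scoped Classical in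
    ∑ q ∈ (Lam n).neighborFinset (u, v), x q =
      ∑ s ∈ ({aR, bR, cR} : Finset RSet), x (liftStep n u v s) := by
  classical
  have : (Lam n).neighborFinset (u, v) = ({aR, bR, cR} : Finset RSet).image (liftStep n u v) := by
    ext q
    simp only [SimpleGraph.mem_neighborFinset, Lam_adj_iff, Finset.mem_image]
  rw [this, Finset.sum_image (liftStep_injective u v).injOn]

theorem castQuad_sub (p q : ZQuad) : castQuad n (p - q) = castQuad n p - castQuad n q := by
  simp [castQuad]

def convolve (S : RSet → List ZQuad) :
    (NQuad n → ZMod 2) →ₗ[ZMod 2] (RSet × NQuad n → ZMod 2) where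
  toFun l p := ((S p.1).map fun c => l (p.2 - castQuad n c)).sum
  map_add' l l' := funext fun p => by simp [List.sum_map_add]
  map_smul' a l := funext fun p => by simp [List.sum_map_mul_left]

theorem convolve_apply (S : RSet → List ZQuad) (l : NQuad n → ZMod 2) (u : RSet) (v : NQuad n) :
    convolve S l (u, v) = ((S u).map fun c => l (v - castQuad n c)).sum :=
  rfl

/-- The offsets, relative to `v`, at which `l` enters the eigenvalue equation of `convolve S l`
at the vertex `(u, v)`. -/
def localOffsets (S : RSet → List ZQuad) (u : RSet) : List ZQuad :=
  S u ++ [aR, bR, cR].flatMap fun s => (S (rmul s u)).map (· - zetaZ u (rmul s u))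

/-- `S u` lists the support over `u` of a finitely supported 1-eigenvector of the `ℤ⁴`-cover
of `MK` with voltages `zetaZ`. -/
def IsEigenPattern (S : RSet → List ZQuad) : Prop :=
  ∀ u, ∀ c ∈ localOffsets S u, Even ((localOffsets S u).count c)

theorem convolve_mem_eigOne [NeZero n] {S : RSet → List ZQuad} (hS : IsEigenPattern S)
    (l : NQuad n → ZMod 2) : convolve S l ∈ eigOne (Lam n) := by
  classical
  rw [mem_eigOne_iff]
  rintro ⟨u, v⟩
  have key := List.sum_map_eq_zero_of_even_count _ (fun c => l (v - castQuad n c)) (hS u)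
  simp only [localOffsets, List.flatMap_cons, List.flatMap_nil, List.append_nil, List.map_append,
    List.sum_append, List.map_map, Function.comp_def, castQuad_sub, sub_sub_eq_add_sub] at key
  rw [sum_neighborFinset_Lam, Finset.sum_insert (by decide), Finset.sum_insert (by decide),
    Finset.sum_singleton]
  simp only [liftStep, convolve_apply]
  grind

def pattern (u : RSet) : List ZQuad :=
  if u = (0, 0, 0, 0) then
    [(-1, -1, -1, -1), (-1, -1, 0, -1), (-1, 0, -1, -1), (-1, 0, 0, -1)]
  else if u = (0, 0, 0, 1) then
    [(0, 0, 0, 0), (0, 0, 1, 0), (0, 1, 0, 0), (0, 1, 1, 0)]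
  else if u = (0, 0, 1, 0) then
    [(0, 0, -1, -1), (0, 0, 0, -1), (0, 0, 0, 0), (0, 0, 1, 0)]
  else if u = (0, 0, 1, 1) then
    [(-1, 0, -1, -1), (-1, 0, 0, -1), (-1, 0, 0, 0), (-1, 0, 1, 0)]
  else if u = (0, 1, 0, 0) then
    [(-1, -1, 0, 0), (-1, 0, 0, 0), (0, 0, 0, 0), (0, 1, 0, 0)]
  else if u = (0, 1, 0, 1) then
    [(-1, -1, 0, -1), (-1, 0, 0, -1), (0, 0, 0, -1), (0, 1, 0, -1)]
  else if u = (0, 1, 1, 0) then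
    [(-1, 0, -1, -1), (-1, 0, 0, 0), (0, 0, -1, -1), (0, 0, 0, -1), (0, 1, 0, -1), (0, 1, 0, 0)]
  else if u = (0, 1, 1, 1) then
    [(-1, -1, 0, -1), (-1, -1, 0, 0), (-1, 0, 0, 0), (-1, 0, 1, 0), (0, 0, 0, -1), (0, 0, 1, 0)]
  else if u = (1, 0, 0, 0) then
    [(-1, -1, -1, -1), (-1, 0, 0, -1), (-1, 0, 0, 0), (-1, 0, 1, 0), (0, 0, 0, -1), (0, 1, 0, -1)]
  else if u = (1, 0, 0, 1) then
    [(-1, -1, 0, 0), (-1, 0, 0, 0), (0, 0, -1, -1), (0, 0, 0, -1), (0, 0, 0, 0), (0, 1, 1, 0)]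
  else if u = (1, 0, 1, 0) then
    [(-1, -1, -1, -1), (-1, -1, 0, 0), (0, 0, 0, -1), (0, 0, 1, 0)]
  else if u = (1, 0, 1, 1) then
    [(-1, 0, -1, -1), (-1, 0, 0, 0), (0, 1, 0, -1), (0, 1, 1, 0)]
  else if u = (1, 1, 0, 0) then
    [(-1, -1, -1, -1), (-1, 0, 0, 0), (0, 0, -1, -1), (0, 1, 0, 0)]
  else if u = (1, 1, 0, 1) then
    [(-1, -1, 0, -1), (-1, 0, 1, 0), (0, 0, 0, -1), (0, 1, 1, 0)]
  else if u = (1, 1, 1, 0) then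
    [(-1, -1, -1, -1), (-1, 0, 0, 0), (0, 0, 0, -1), (0, 1, 1, 0)]
  else
    [(-1, -1, -1, -1), (-1, 0, 0, 0), (0, 0, 0, -1), (0, 1, 1, 0)]

theorem isEigenPattern_pattern : IsEigenPattern pattern := by
  unfold IsEigenPattern; decide

theorem convolve_pattern_zR (l : NQuad n → ZMod 2) (v : NQuad n) :
    convolve pattern l (zR, v) =
      l v + l (v - (0, 0, 1, 0)) +
        (l (v - (0, 1, 0, 0)) + l (v - (0, 1, 0, 0) - (0, 0, 1, 0))) := by
  have : pattern zR = [(0, 0, 0, 0), (0, 0, 1, 0), (0, 1, 0, 0), (0, 1, 1, 0)] := by decide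
  simp [convolve_apply, this, castQuad, add_assoc, sub_sub, Prod.mk_zero_zero]

abbrev Bulk (n : ℕ) := ZMod n × {i : ZMod n // i ≠ -1} × {j : ZMod n // j ≠ -1} × ZMod n

def Bulk.val (p : Bulk n) : NQuad n := (p.1, p.2.1, p.2.2.1, p.2.2.2)

theorem Bulk.val_injective : Function.Injective (Bulk.val (n := n)) := by
  rintro ⟨a, ⟨i, hi⟩, ⟨j, hj⟩, d⟩ ⟨a', ⟨i', hi'⟩, ⟨j', hj'⟩, d'⟩ h
  simp_all [Bulk.val]

theorem Bulk.card [NeZero n] : Fintype.card (Bulk n) = n * ((n - 1) * ((n - 1) * n)) := by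
  simp [Fintype.card_subtype_compl]

theorem convolve_pattern_extend_injective [NeZero n] :
    Function.Injective
      ((convolve pattern).comp (Function.ExtendByZero.linearMap (ZMod 2) (Bulk.val (n := n)))) := by
  refine (injective_iff_map_eq_zero _).mpr fun μ hμ => ?_
  set l : NQuad n → ZMod 2 := Function.extend Bulk.val μ 0 with hl
  have hY : ∀ v, convolve pattern l (zR, v) = 0 := fun v => congrFun hμ (zR, v)
  have hout : ∀ v : NQuad n, v.2.1 = -1 ∨ v.2.2.1 = -1 → l v = 0 := by
    refine fun v hv => Function.extend_apply' _ _ _ ?_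
    rintro ⟨p, rfl⟩
    exact hv.elim p.2.1.2 p.2.2.1.2
  have hg : (fun v => l v + l (v - (0, 0, 1, 0))) = 0 := by
    refine eq_zero_of_add_sub_eq_zero (s := (0, 1, 0, 0)) (T := {v | v.2.1 = -1}) ?_ ?_ ?_
    · intro v
      rw [← hY v, convolve_pattern_zR]
    · intro v hv
      rw [hout v (.inl hv), hout _ (.inl (by simpa using hv)), add_zero]
    · intro v
      exact ⟨(-1 - v.2.1).val, by simp⟩
  have hl0 : l = 0 := by
    refine eq_zero_of_add_sub_eq_zero (s := (0, 0, 1, 0)) (T := {v | v.2.2.1 = -1})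
      (congrFun hg) (fun v hv => hout v (.inr hv)) fun v => ⟨(-1 - v.2.2.1).val, by simp⟩
  funext p
  rw [Pi.zero_apply, ← Bulk.val_injective.extend_apply μ 0 p, ← hl, hl0, Pi.zero_apply]

theorem le_finrank_eigOne_Lam [NeZero n] :
    n * ((n - 1) * ((n - 1) * n)) ≤ Module.finrank (ZMod 2) (eigOne (Lam n)) := by
  let Φ := (convolve pattern).comp (Function.ExtendByZero.linearMap (ZMod 2) (Bulk.val (n := n)))
  have hΦ : ∀ μ, Φ μ ∈ eigOne (Lam n) := fun μ => convolve_mem_eigOne isEigenPattern_pattern _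
  rw [← Bulk.card, ← Module.finrank_fintype_fun_eq_card (ZMod 2)]
  exact LinearMap.finrank_le_finrank_of_injective (f := Φ.codRestrict _ hΦ)
    ((LinearMap.injective_codRestrict_iff hΦ).mpr convolve_pattern_extend_injective)

end Cover

/-- For `n ≥ 3`, the 1-eigenspace of `Λ_n` over `F₂` satisfies
`72 · dim E₁(Λ_n) ≥ 16n⁴ = |V(Λ_n)|`. -/
theorem statement10 (n : ℕ) (hn : 3 ≤ n) :
    haveI : NeZero n := ⟨by omega⟩
    16 * n ^ 4 = Nat.card (RSet × NQuad n) ∧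
    16 * n ^ 4 ≤ 72 * Module.finrank (ZMod 2) (eigOne (Lam n)) := by
  have : NeZero n := ⟨by omega⟩
  refine ⟨by simp [Nat.card_eq_fintype_card]; ring,
    le_trans ?_ (Nat.mul_le_mul_left 72 le_finrank_eigOne_Lam)⟩
  obtain ⟨m, rfl⟩ : ∃ m, n = m + 3 := ⟨n - 3, by omega⟩
  rw [show m + 3 - 1 = m + 2 by omega]
  nlinarith [sq_nonneg m]
end

section
/- Let Λ be a finite simple graph in which any two distinct vertices have distinct neighbourhoods, and let Γ = Λ[K̄_2]. For x ∈ E_1(Λ) let g_x be the permutation of V(Γ) given by g_x(v,i) = (v, i + x(v)). Then {g_x : x ∈ E_1(Λ)} is a subgroup of Aut(Γ), and it is a normal subgroup of Aut(Γ). -/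
/-- The lexicographic product `Λ[K̄₂]`: vertex set `V(Λ) × F₂`, with `(u,i)` adjacent to
`(v,j)` iff `u` is adjacent to `v` in `Λ`. -/
def lexK2 {V : Type*} (Λ : SimpleGraph V) : SimpleGraph (V × ZMod 2) where
  Adj p q := Λ.Adj p.1 q.1
  symm := ⟨fun _ _ h => Λ.adj_symm h⟩
  loopless := ⟨fun p h => Λ.irrefl h⟩

/-- A permutation `g` of the vertex set is an automorphism of the graph `Γ`. -/
def IsGraphAut {V : Type*} (Γ : SimpleGraph V) (g : Equiv.Perm V) : Prop :=
  ∀ u v : V, Γ.Adj (g u) (g v) ↔ Γ.Adj u v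

/-- For `x : V → F₂`, the permutation `g_x` of `V × F₂` given by
`g_x(v,i) = (v, i + x(v))`. -/
def gx {V : Type*} (x : V → ZMod 2) : Equiv.Perm (V × ZMod 2) where
  toFun p := (p.1, p.2 + x p.1)
  invFun p := (p.1, p.2 + x p.1)
  left_inv := by
    intro p
    have h : ∀ a : ZMod 2, a + a = 0 := by decide
    simp [add_assoc, h]
  right_inv := by
    intro p
    have h : ∀ a : ZMod 2, a + a = 0 := by decide
    simp [add_assoc, h]

/-!
In `Λ[K̄₂]` the vertex `(v, i)` has neighbourhood `N(v) × F₂`, so when `Λ` is twin-free two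
vertices of `Λ[K̄₂]` have the same neighbourhood exactly when they lie in the same fibre
`{v} × F₂`. An automorphism `h` preserves neighbourhoods, hence maps fibres onto fibres, inducing
an automorphism `σ` of `Λ` and commuting with the flip of every fibre. Consequently
`h g_x h⁻¹ = g_{x ∘ σ⁻¹}`, and `x ∘ σ⁻¹` lies in `E₁(Λ)` because the adjacency matrix is
invariant under `σ`.
-/

open Matrix

section gx

variable {V : Type*}

lemma gx_apply (x : V → ZMod 2) (p : V × ZMod 2) : gx x p = (p.1, p.2 + x p.1) := rfl

lemma gx_add (x y : V → ZMod 2) : gx (x + y) = gx x * gx y := by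
  ext p : 1
  simp only [gx_apply, Pi.add_apply, Equiv.Perm.mul_apply, Prod.mk.injEq, true_and]
  ring

lemma gx_zero : gx (0 : V → ZMod 2) = 1 := by
  ext p : 1
  simp [gx_apply]

lemma gx_inv (x : V → ZMod 2) : (gx x)⁻¹ = gx x := rfl

lemma isGraphAut_gx {Λ : SimpleGraph V} (x : V → ZMod 2) : IsGraphAut (lexK2 Λ) (gx x) :=
  fun _ _ => Iff.rfl

def gxSubgroup (S : AddSubgroup (V → ZMod 2)) : Subgroup (Equiv.Perm (V × ZMod 2)) where
  carrier := {g | ∃ x ∈ S, g = gx x}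
  mul_mem' := by
    rintro _ _ ⟨x, hx, rfl⟩ ⟨y, hy, rfl⟩
    exact ⟨x + y, S.add_mem hx hy, (gx_add x y).symm⟩
  one_mem' := ⟨0, S.zero_mem, gx_zero.symm⟩
  inv_mem' := by
    rintro _ ⟨x, hx, rfl⟩
    exact ⟨x, hx, gx_inv x⟩

end gx

section eigOne

variable {V : Type*} [Fintype V] {Λ : SimpleGraph V}

open scoped Classical in
lemma mem_eigOne_iff_s16 {x : V → ZMod 2} : x ∈ eigOne Λ ↔ Λ.adjMatrix (ZMod 2) *ᵥ x = x := by
  simp [eigOne, sub_eq_zero]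

lemma comp_mem_eigOne (σ : Λ ≃g Λ) {x : V → ZMod 2} (hx : x ∈ eigOne Λ) : x ∘ σ ∈ eigOne Λ := by
  classical
  rw [mem_eigOne_iff_s16] at hx ⊢
  calc Λ.adjMatrix (ZMod 2) *ᵥ (x ∘ σ)
      = (Λ.adjMatrix (ZMod 2)).submatrix σ.toEquiv σ.toEquiv *ᵥ (x ∘ σ.toEquiv) :=
        congrArg (· *ᵥ (x ∘ σ)) (σ.toEmbedding.submatrix_adjMatrix (ZMod 2)).symm
    _ = (Λ.adjMatrix (ZMod 2) *ᵥ x) ∘ σ := by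
        rw [submatrix_mulVec_equiv, Function.comp_assoc, Equiv.self_comp_symm]
        rfl
    _ = x ∘ σ := by rw [hx]

end eigOne

lemma zmod_two_eq_add_one_of_ne : ∀ {a b : ZMod 2}, a ≠ b → a = b + 1 := by
  decide

lemma IsGraphAut.inv {W : Type*} {Γ : SimpleGraph W} {g : Equiv.Perm W} (hg : IsGraphAut Γ g) :
    IsGraphAut Γ g⁻¹ :=
  fun u v => by simpa using (hg (g⁻¹ u) (g⁻¹ v)).symm

namespace IsGraphAut

variable {V : Type*} {Λ : SimpleGraph V} {g : Equiv.Perm (V × ZMod 2)}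
  (hΛ : Function.Injective Λ.neighborSet) (hg : IsGraphAut (lexK2 Λ) g)
include hΛ hg

lemma fst_apply_eq {p q : V × ZMod 2} (h : p.1 = q.1) : (g p).1 = (g q).1 := by
  refine hΛ (Set.ext fun w => ?_)
  obtain ⟨r, hr⟩ := g.surjective (w, 0)
  have hp := hg p r
  have hq := hg q r
  rw [hr] at hp hq
  have hpq : (lexK2 Λ).Adj p r ↔ (lexK2 Λ).Adj q r := by
    change Λ.Adj p.1 r.1 ↔ Λ.Adj q.1 r.1
    rw [h]
  exact hp.trans (hpq.trans hq.symm)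

lemma apply_add (p : V × ZMod 2) (c : ZMod 2) :
    g (p.1, p.2 + c) = ((g p).1, (g p).2 + c) := by
  have hfst : (g (p.1, p.2 + c)).1 = (g p).1 := hg.fst_apply_eq hΛ rfl
  rcases (by decide : ∀ c : ZMod 2, c = 0 ∨ c = 1) c with rfl | rfl
  · simp
  · have hsnd : (g (p.1, p.2 + 1)).2 ≠ (g p).2 := fun h =>
      succ_ne_self p.2 (congrArg Prod.snd (g.injective (Prod.ext hfst h)))
    exact Prod.ext hfst (zmod_two_eq_add_one_of_ne hsnd)

def baseIso : Λ ≃g Λ where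
  toFun v := (g (v, 0)).1
  invFun v := (g⁻¹ (v, 0)).1
  left_inv v := by
    change (g⁻¹ ((g (v, 0)).1, 0)).1 = v
    rw [hg.inv.fst_apply_eq hΛ (p := ((g (v, 0)).1, 0)) (q := g (v, 0)) rfl]
    simp
  right_inv v := by
    change (g ((g⁻¹ (v, 0)).1, 0)).1 = v
    rw [hg.fst_apply_eq hΛ (p := ((g⁻¹ (v, 0)).1, 0)) (q := g⁻¹ (v, 0)) rfl]
    simp
  map_rel_iff' := hg _ _

lemma gx_mul_eq (x : V → ZMod 2) : gx x * g = g * gx (x ∘ baseIso hΛ hg) := by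
  ext1 p
  simp only [Equiv.Perm.mul_apply, gx_apply, Function.comp_apply]
  rw [hg.apply_add hΛ, hg.fst_apply_eq hΛ (p := p) (q := (p.1, 0)) rfl]
  rfl

end IsGraphAut

/-- If any two distinct vertices of `Λ` have distinct neighbourhoods, then
`{g_x : x ∈ E₁(Λ)}` is a subgroup of `Aut(Λ[K̄₂])`, normalised by every automorphism of
`Λ[K̄₂]`. -/
theorem statement16 {V : Type*} [Fintype V] (Λ : SimpleGraph V)
    (hnbr : ∀ u v : V, u ≠ v → Λ.neighborSet u ≠ Λ.neighborSet v) :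
    ∃ H : Subgroup (Equiv.Perm (V × ZMod 2)),
      (H : Set (Equiv.Perm (V × ZMod 2))) = {g | ∃ x ∈ eigOne Λ, g = gx x} ∧
      (∀ g ∈ H, IsGraphAut (lexK2 Λ) g) ∧
      (∀ h : Equiv.Perm (V × ZMod 2), IsGraphAut (lexK2 Λ) h →
        ∀ g ∈ H, h * g * h⁻¹ ∈ H) := by
  have hΛ : Function.Injective Λ.neighborSet := fun u v huv =>
    by_contra fun hne => hnbr u v hne huv
  refine ⟨gxSubgroup (eigOne Λ).toAddSubgroup, rfl, ?_, ?_⟩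
  · rintro _ ⟨x, -, rfl⟩
    exact isGraphAut_gx x
  · rintro h hh _ ⟨x, hx, rfl⟩
    refine ⟨x ∘ hh.inv.baseIso hΛ, comp_mem_eigOne _ hx, ?_⟩
    rw [mul_assoc, hh.inv.gx_mul_eq hΛ, ← mul_assoc, mul_inv_cancel, one_mul]
end
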